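/- The series ∑_{m=1}^∞ (binomial(2m, m-1)/(m·4^m))² converges to 16/π - 5. -/

import Mathlib

/-!
With `u n = C(2n, n) / 4ⁿ` the `m`-th term is `(u (m+1) / (m+2))²`, and the series telescopes:
since `u (n+1) = u n (2n+1) / (2n+2)`, the increment of `(16n + 4) u n²` is exactly
`(u n / (n+1))²`. The sum is therefore `lim (16n + 4) u n² - 20 u 1² = 8 lim (2n + 1) u n² - 5`,
and `(2n + 1) u n²` is the reciprocal of the `n`-th Wallis product, which tends to `π / 2`.
-/

open Real Filter Topology Finset

lemma hasSum_sub_of_monotone_of_tendsto {g : ℕ → ℝ} {l : ℝ} (hg : Monotone g)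
    (hl : Tendsto g atTop (𝓝 l)) : HasSum (fun n => g (n + 1) - g n) (l - g 0) := by
  rw [hasSum_iff_tendsto_nat_of_nonneg (fun n => sub_nonneg.2 (hg n.le_succ))]
  simp_rw [sum_range_sub]
  exact hl.sub_const _

noncomputable def returnProb (n : ℕ) : ℝ := (n.centralBinom : ℝ) / 4 ^ n

lemma returnProb_succ (n : ℕ) : returnProb (n + 1) = returnProb n * (2 * n + 1) / (2 * n + 2) := by
  have h : ((n : ℝ) + 1) * (n + 1).centralBinom = 2 * (2 * n + 1) * n.centralBinom := by
    exact_mod_cast Nat.succ_mul_centralBinom_succ n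
  unfold returnProb
  rw [pow_succ]
  field_simp
  linear_combination 2 * h

lemma two_mul_add_one_mul_returnProb_sq (n : ℕ) :
    (2 * n + 1) * returnProb n ^ 2 = (Wallis.W n)⁻¹ := by
  have h : (n.centralBinom : ℝ) * n.factorial ^ 2 = (2 * n).factorial := by
    have := Nat.choose_mul_factorial_mul_factorial (by omega : n ≤ 2 * n)
    rw [Nat.two_mul, Nat.add_sub_cancel, ← Nat.two_mul, mul_assoc] at this
    rw [Nat.centralBinom_eq_two_mul_choose, sq]
    exact_mod_cast this
  have h16 : (2 : ℝ) ^ (4 * n) = (4 ^ n) ^ 2 := by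
    rw [← pow_mul, pow_mul, mul_comm, pow_mul]
    norm_num
  rw [Wallis.W_eq_factorial_ratio, inv_div, returnProb, ← h, h16]
  field_simp

lemma tendsto_two_mul_add_one_mul_returnProb_sq :
    Tendsto (fun n : ℕ => (2 * n + 1) * returnProb n ^ 2) atTop (𝓝 (2 / π)) := by
  simp_rw [two_mul_add_one_mul_returnProb_sq]
  convert Wallis.tendsto_W_nhds_pi_div_two.inv₀ (by positivity) using 1
  rw [inv_div]

noncomputable def sumPrimitive (n : ℕ) : ℝ := (16 * n + 4) * returnProb n ^ 2

lemma sumPrimitive_succ_sub (n : ℕ) :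
    sumPrimitive (n + 1) - sumPrimitive n = (returnProb n / (n + 1)) ^ 2 := by
  unfold sumPrimitive
  rw [returnProb_succ]
  push_cast
  field_simp
  ring

lemma tendsto_sumPrimitive : Tendsto sumPrimitive atTop (𝓝 (16 / π)) := by
  have hinv : Tendsto (fun n : ℕ => (2 * (n : ℝ) + 1)⁻¹) atTop (𝓝 0) :=
    tendsto_inv_atTop_zero.comp <| tendsto_atTop_add_const_right _ 1 <|
      tendsto_natCast_atTop_atTop.const_mul_atTop two_pos
  have h := ((tendsto_const_nhds (x := (8 : ℝ))).sub (hinv.const_mul 4)).mul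
    tendsto_two_mul_add_one_mul_returnProb_sq
  convert h using 1
  · ext n
    unfold sumPrimitive
    field_simp
    ring
  · rw [mul_zero, sub_zero, mul_div_assoc']
    norm_num

lemma choose_two_mul_succ_div (m : ℕ) :
    ((2 * (m + 1)).choose m : ℝ) / ((m + 1) * 4 ^ (m + 1)) = returnProb (m + 1) / (m + 2) := by
  have h : ((2 * (m + 1)).choose (m + 1) : ℝ) * (m + 1) = (2 * (m + 1)).choose m * (m + 2) := by
    have := Nat.choose_succ_right_eq (2 * (m + 1)) m
    rw [show 2 * (m + 1) - m = m + 2 by omega] at this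
    exact_mod_cast this
  rw [returnProb, Nat.centralBinom_eq_two_mul_choose]
  field_simp
  linear_combination -h

/-- `∑_{m=1}^∞ (binomial(2m, m-1)/(m·4^m))² = 16/π - 5`. -/
theorem stmt_6 :
    HasSum (fun m : ℕ =>
      (((2 * (m + 1)).choose m : ℝ) / ((m + 1) * 4 ^ (m + 1))) ^ 2)
      (16 / π - 5) := by
  have hmono : Monotone fun n => sumPrimitive (n + 1) := monotone_nat_of_le_succ fun n =>
    sub_nonneg.1 <| (sumPrimitive_succ_sub (n + 1)).symm ▸ sq_nonneg _
  have hsum := hasSum_sub_of_monotone_of_tendsto hmono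
    (tendsto_sumPrimitive.comp (tendsto_add_atTop_nat 1))
  have hone : sumPrimitive 1 = 5 := by
    norm_num [sumPrimitive, returnProb, Nat.centralBinom, Nat.choose]
  rw [zero_add, hone] at hsum
  convert hsum using 2 with m
  rw [choose_two_mul_succ_div, sumPrimitive_succ_sub]
  push_cast
  ring
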